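/- Fix an integer m ≥ 2, let (t_j)_{j≥0} be the TM_m sequence and let t denote the corresponding infinite word t_0 t_1 t_2 …. Then for every positive integer n, the complexity function satisfies p_t(n) ≤ m³ · n, where p_t(n) is the number of distinct subwords of t of length n. -/

import Mathlib

/-!
Write a position as `i = r + m^k q` with `r < m^k`, where `n ≤ m^k ≤ m n`. Since the base-`m`
digit sum is additive over such a split, the length-`n` factor starting at `i` only reads
positions in the two consecutive blocks `q` and `q + 1`, and is determined by `r`, `t_q` and
`t_{q+1}`. Hence there are at most `m^k · m² ≤ m³ n` factors of length `n`.
-/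

/-- The `TM_m` sequence: `t n = (sum of base-m digits of n) % m`. -/
def tm (m n : ℕ) : ℕ := (Nat.digits m n).sum % m

/-- The complexity function of the infinite word `a 0, a 1, a 2, ...`:
the number of distinct factors (contiguous subwords) of length `n`. -/
noncomputable def complexity (a : ℕ → ℕ) (n : ℕ) : ℕ :=
  {w : List ℕ | ∃ i : ℕ, w = (List.range n).map fun k => a (i + k)}.ncard

theorem Nat.exists_le_pow_le_mul {b n : ℕ} (hb : 1 < b) (hn : 0 < n) :
    ∃ k, n ≤ b ^ k ∧ b ^ k ≤ b * n := by
  rcases (Nat.one_le_iff_ne_zero.mpr hn.ne').lt_or_eq with hn1 | rfl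
  · refine ⟨Nat.clog b n, Nat.le_pow_clog hb n, ?_⟩
    have hpos : 0 < Nat.clog b n := Nat.clog_pos hb hn1
    calc b ^ Nat.clog b n = b * b ^ (Nat.clog b n - 1) := (mul_pow_sub_one hpos.ne' b).symm
      _ ≤ b * n := Nat.mul_le_mul_left b (Nat.pow_pred_clog_lt_self hb hn1).le
  · exact ⟨0, by simp, by simpa using hb.le⟩

theorem Nat.digits_sum_add_pow_mul {b k q r : ℕ} (hb : 1 < b) (hr : r < b ^ k) :
    (Nat.digits b (r + b ^ k * q)).sum = (Nat.digits b r).sum + (Nat.digits b q).sum := by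
  rcases Nat.eq_zero_or_pos q with rfl | hq
  · simp
  have hlen : (Nat.digits b r).length ≤ k := (Nat.digits_length_le_iff hb r).mpr hr
  rw [← Nat.add_sub_cancel' hlen, ← Nat.digits_append_zeroes_append_digits hb hq]
  simp

def factor (a : ℕ → ℕ) (n i : ℕ) : List ℕ :=
  (List.range n).map fun k => a (i + k)

theorem complexity_le_card_of_factor_mem {a : ℕ → ℕ} {n : ℕ} (s : Finset (List ℕ))
    (hs : ∀ i, factor a n i ∈ s) : complexity a n ≤ s.card := by
  rw [← Set.ncard_coe_finset]
  refine Set.ncard_le_ncard ?_ s.finite_toSet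
  rintro w ⟨i, rfl⟩
  exact hs i

section TM

variable {m : ℕ}

theorem tm_lt (hm : 0 < m) (i : ℕ) : tm m i < m :=
  Nat.mod_lt _ hm

theorem tm_add_pow_mul (hm : 1 < m) {k q r : ℕ} (hr : r < m ^ k) :
    tm m (r + m ^ k * q) = (tm m r + tm m q) % m := by
  rw [tm, tm, tm, Nat.digits_sum_add_pow_mul hm hr, Nat.add_mod]

/-- The factor of length `n` starting at offset `r` inside the block `[m^k q, m^k (q + 2))`,
given `x = t_q` and `y = t_{q+1}`. -/
def tmBlockFactor (m k n r x y : ℕ) : List ℕ :=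
  (List.range n).map fun j =>
    if r + j < m ^ k then (tm m (r + j) + x) % m else (tm m (r + j - m ^ k) + y) % m

theorem factor_tm_eq_tmBlockFactor (hm : 1 < m) {k n : ℕ} (hn : n ≤ m ^ k) (i : ℕ) :
    factor (tm m) n i =
      tmBlockFactor m k n (i % m ^ k) (tm m (i / m ^ k)) (tm m (i / m ^ k + 1)) := by
  have hr : i % m ^ k < m ^ k := Nat.mod_lt _ (by positivity)
  have hi : i = i % m ^ k + m ^ k * (i / m ^ k) := (Nat.mod_add_div i (m ^ k)).symm
  refine List.map_congr_left fun j hj => ?_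
  have hj : j < n := List.mem_range.mp hj
  split_ifs with hc
  · rw [← tm_add_pow_mul hm hc]
    congr 1
    omega
  · have hc' : i % m ^ k + j - m ^ k < m ^ k := by omega
    rw [← tm_add_pow_mul hm hc']
    congr 1
    rw [mul_add]
    omega

theorem complexity_tm_le (hm : 1 < m) {k n : ℕ} (hn : n ≤ m ^ k) :
    complexity (tm m) n ≤ m ^ k * (m * m) := by
  set codes := Finset.range (m ^ k) ×ˢ Finset.range m ×ˢ Finset.range m
  calc complexity (tm m) n
      ≤ (codes.image fun c => tmBlockFactor m k n c.1 c.2.1 c.2.2).card := by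
        refine complexity_le_card_of_factor_mem _ fun i => Finset.mem_image.mpr ?_
        refine ⟨(i % m ^ k, tm m (i / m ^ k), tm m (i / m ^ k + 1)), ?_,
          (factor_tm_eq_tmBlockFactor hm hn i).symm⟩
        simp only [codes, Finset.mem_product, Finset.mem_range]
        exact ⟨Nat.mod_lt _ (by positivity), tm_lt (by omega) _, tm_lt (by omega) _⟩
    _ ≤ codes.card := Finset.card_image_le
    _ = m ^ k * (m * m) := by simp [codes]

end TM

/-- The complexity function of the `TM_m` sequence satisfies `p(n) ≤ m³ · n`. -/
theorem tm_complexity_le (m : ℕ) (hm : 2 ≤ m) (n : ℕ) (hn : 0 < n) :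
    complexity (tm m) n ≤ m ^ 3 * n := by
  obtain ⟨k, hnk, hkn⟩ := Nat.exists_le_pow_le_mul hm hn
  calc complexity (tm m) n ≤ m ^ k * (m * m) := complexity_tm_le hm hnk
    _ ≤ m * n * (m * m) := Nat.mul_le_mul_right _ hkn
    _ = m ^ 3 * n := by ring
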